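/- Let 0 < a < b and let f₋, f₊ : (a,b) → ℝ be C² solutions of system (S) on (a,b). Then the Pohozaev identity holds pointwise on (a,b): d/dr [ r²(f₋'(r))² + r²(f₊'(r))² + r² f₊'(r) f₋'(r) − f₋(r)² − f₊(r)² − f₋(r) f₊(r) ] = r² · d/dr [ W(f₋(r), f₊(r)) ]. -/

import Mathlib

/-- The radial Laplacian `Δ_r u(r) = u''(r) + u'(r)/r`. -/
noncomputable def radLap (f : ℝ → ℝ) (r : ℝ) : ℝ := deriv (deriv f) r + deriv f r / r

/-- System (S): the equivariant isotropic p-wave Ginzburg–Landau system with degrees (-1, 1). -/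
def SystemS (fm fp : ℝ → ℝ) (r : ℝ) : Prop :=
  radLap fm r - fm r / r ^ 2 + (1 / 2) * (radLap fp r - fp r / r ^ 2)
      = fm r * (fm r ^ 2 - 1) + 2 * fm r * fp r ^ 2 ∧
  radLap fp r - fp r / r ^ 2 + (1 / 2) * (radLap fm r - fm r / r ^ 2)
      = fp r * (fp r ^ 2 - 1) + 2 * fp r * fm r ^ 2

/-- The normalized radial potential density `W(f₋,f₊) = ½(f₋²+f₊²−1)² + f₋²f₊²`. -/
noncomputable def Wpot (x y : ℝ) : ℝ := (1 / 2) * (x ^ 2 + y ^ 2 - 1) ^ 2 + x ^ 2 * y ^ 2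

/-!
The right-hand sides of (S) are `½ ∂W/∂f₋` and `½ ∂W/∂f₊`. Multiplying the two equations by
`2 r² f₋'` and `2 r² f₊'` and adding them, the right side becomes `r² (W(f₋, f₊))'`, while on
the left the weight `r²` turns the first-order terms `r f'` of `Δ_r` and the terms `f / r²` into
exact derivatives, giving the derivative of the Pohozaev quantity.
-/

theorem hasDerivAt_wpot_comp {fm fp : ℝ → ℝ} {u' v' r : ℝ}
    (hm : HasDerivAt fm u' r) (hp : HasDerivAt fp v' r) :
    HasDerivAt (fun s => Wpot (fm s) (fp s))
      (2 * (fm r * (fm r ^ 2 - 1) + 2 * fm r * fp r ^ 2) * u'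
        + 2 * (fp r * (fp r ^ 2 - 1) + 2 * fp r * fm r ^ 2) * v') r := by
  have h : HasDerivAt (fun s => Wpot (fm s) (fp s)) _ r :=
    ((((hm.pow 2).add (hp.pow 2)).sub_const 1).pow 2).const_mul (1 / 2 : ℝ)
      |>.add ((hm.pow 2).mul (hp.pow 2))
  exact h.congr_deriv (by simp only [Pi.add_apply, Pi.pow_apply]; push_cast; ring)

theorem hasDerivAt_pohozaev {fm fp : ℝ → ℝ} {r : ℝ}
    (hm : DifferentiableAt ℝ fm r) (hp : DifferentiableAt ℝ fp r)
    (hm' : DifferentiableAt ℝ (deriv fm) r) (hp' : DifferentiableAt ℝ (deriv fp) r) :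
    HasDerivAt (fun s => s ^ 2 * (deriv fm s) ^ 2 + s ^ 2 * (deriv fp s) ^ 2
        + s ^ 2 * deriv fp s * deriv fm s - fm s ^ 2 - fp s ^ 2 - fm s * fp s)
      (2 * r * (deriv fm r ^ 2 + deriv fp r ^ 2 + deriv fp r * deriv fm r)
        + r ^ 2 * (2 * deriv fm r * deriv (deriv fm) r + 2 * deriv fp r * deriv (deriv fp) r
          + deriv (deriv fp) r * deriv fm r + deriv fp r * deriv (deriv fm) r)
        - 2 * fm r * deriv fm r - 2 * fp r * deriv fp r
        - (deriv fm r * fp r + fm r * deriv fp r)) r := by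
  have hsq : HasDerivAt (fun s : ℝ => s ^ 2) (2 * r) r := by
    simpa using hasDerivAt_pow 2 r
  have h : HasDerivAt (fun s => s ^ 2 * (deriv fm s) ^ 2 + s ^ 2 * (deriv fp s) ^ 2
      + s ^ 2 * deriv fp s * deriv fm s - fm s ^ 2 - fp s ^ 2 - fm s * fp s) _ r :=
    ((((hsq.mul (hm'.hasDerivAt.pow 2)).add (hsq.mul (hp'.hasDerivAt.pow 2))).add
      ((hsq.mul hp'.hasDerivAt).mul hm'.hasDerivAt)).sub (hm.hasDerivAt.pow 2)).sub
      (hp.hasDerivAt.pow 2) |>.sub (hm.hasDerivAt.mul hp.hasDerivAt)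
  exact h.congr_deriv (by simp only [Pi.mul_apply, Pi.pow_apply]; push_cast; ring)

theorem pohozaev_identity_at {fm fp : ℝ → ℝ} {r : ℝ} (hr : r ≠ 0)
    (hm : DifferentiableAt ℝ fm r) (hp : DifferentiableAt ℝ fp r)
    (hm' : DifferentiableAt ℝ (deriv fm) r) (hp' : DifferentiableAt ℝ (deriv fp) r)
    (hS : SystemS fm fp r) :
    deriv (fun s => s ^ 2 * (deriv fm s) ^ 2 + s ^ 2 * (deriv fp s) ^ 2
        + s ^ 2 * deriv fp s * deriv fm s - fm s ^ 2 - fp s ^ 2 - fm s * fp s) r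
      = r ^ 2 * deriv (fun s => Wpot (fm s) (fp s)) r := by
  rw [(hasDerivAt_pohozaev hm hp hm' hp').deriv,
    (hasDerivAt_wpot_comp hm.hasDerivAt hp.hasDerivAt).deriv]
  obtain ⟨hSm, hSp⟩ := hS
  unfold radLap at hSm hSp
  linear_combination (norm := (field_simp; ring1))
    (2 * r ^ 2 * deriv fm r) * hSm + (2 * r ^ 2 * deriv fp r) * hSp

theorem ContDiffOn.differentiableAt_deriv_of_isOpen {𝕜 F : Type*} [NontriviallyNormedField 𝕜]
    [NormedAddCommGroup F] [NormedSpace 𝕜 F] {f : 𝕜 → F} {U : Set 𝕜} {x : 𝕜}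
    (hf : ContDiffOn 𝕜 2 f U) (hU : IsOpen U) (hx : x ∈ U) :
    DifferentiableAt 𝕜 (deriv f) x :=
  ((hf.deriv_of_isOpen (m := 1) hU (by norm_num)).contDiffAt (hU.mem_nhds hx)).differentiableAt
    (by norm_num)

theorem stmt4_general (a b : ℝ) (ha : 0 < a) (fm fp : ℝ → ℝ)
    (hfm : ContDiffOn ℝ 2 fm (Set.Ioo a b)) (hfp : ContDiffOn ℝ 2 fp (Set.Ioo a b))
    (hS : ∀ r ∈ Set.Ioo a b, SystemS fm fp r) :
    ∀ r ∈ Set.Ioo a b,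
      deriv (fun s => s ^ 2 * (deriv fm s) ^ 2 + s ^ 2 * (deriv fp s) ^ 2
          + s ^ 2 * deriv fp s * deriv fm s - fm s ^ 2 - fp s ^ 2 - fm s * fp s) r
        = r ^ 2 * deriv (fun s => Wpot (fm s) (fp s)) r := by
  intro r hr
  have hU : Set.Ioo a b ∈ nhds r := isOpen_Ioo.mem_nhds hr
  exact pohozaev_identity_at (ha.trans hr.1).ne'
    ((hfm.contDiffAt hU).differentiableAt (by norm_num))
    ((hfp.contDiffAt hU).differentiableAt (by norm_num))
    (hfm.differentiableAt_deriv_of_isOpen isOpen_Ioo hr)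
    (hfp.differentiableAt_deriv_of_isOpen isOpen_Ioo hr) (hS r hr)

theorem stmt4 (a b : ℝ) (ha : 0 < a) (hab : a < b) (fm fp : ℝ → ℝ)
    (hfm : ContDiffOn ℝ 2 fm (Set.Ioo a b)) (hfp : ContDiffOn ℝ 2 fp (Set.Ioo a b))
    (hS : ∀ r ∈ Set.Ioo a b, SystemS fm fp r) :
    ∀ r ∈ Set.Ioo a b,
      deriv (fun s => s ^ 2 * (deriv fm s) ^ 2 + s ^ 2 * (deriv fp s) ^ 2
          + s ^ 2 * deriv fp s * deriv fm s - fm s ^ 2 - fp s ^ 2 - fm s * fp s) r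
        = r ^ 2 * deriv (fun s => Wpot (fm s) (fp s)) r :=
  stmt4_general a b ha fm fp hfm hfp hS
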